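/- arXiv:2503.12300 — 2 statements merged into one kernel-verified Lean document; each statement's English description precedes it below -/
import Mathlib

section
/- Let p be a prime and G a group of order p^3 of maximal class (i.e. nilpotency class 2, equivalently non-abelian). Then CD(G) is exactly the set of subgroups H of G with Z(G) ≤ H; it is a quasi-antichain of width p+1, with every subgroup strictly between Z(G) and G abelian. -/
/-- The Chermak-Delgado measure of a subgroup `H` of `G`: `|H| · |C_G(H)|`. -/
noncomputable def cdMeasure (G : Type*) [Group G] (H : Subgroup G) : ℕ :=
  Nat.card H * Nat.card (Subgroup.centralizer (H : Set G))

/-- The Chermak-Delgado lattice of `G`: the set of subgroups whose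
Chermak-Delgado measure is maximal. -/
def CD (G : Type*) [Group G] : Set (Subgroup G) :=
  {H : Subgroup G | ∀ K : Subgroup G, cdMeasure G K ≤ cdMeasure G H}

/-! A non-abelian group of order `p³` has centre `Z` of order `p`: a larger centre would have
cyclic quotient. A subgroup `H` of order `p²` is abelian and not central, so its centralizer is
a proper subgroup containing `H`; hence `C_G(H) = H`, and in particular `Z ≤ H`. So `Z`, the
subgroups of order `p²` and `G` all have measure `p⁴`, while every other subgroup has order at
most `p` and measure at most `p³`. The subgroups strictly between `Z` and `G` are exactly the
centralizers `C_G(x)` with `x ∉ Z`, each such `x` lying in only one of them; they partition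
`G ∖ Z` into blocks of `p² - p` elements, so there are `(p³ - p) / (p² - p) = p + 1` of
them. -/

open Subgroup

theorem Subgroup.ncard_mul_sub_card_eq_of_existsUnique_mem {G : Type*} [Group G] [Finite G]
    (Z : Subgroup G) (S : Set (Subgroup G)) {n : ℕ} (hS : ∀ H ∈ S, Z ≤ H ∧ Nat.card H = n)
    (hunique : ∀ x ∉ Z, ∃! H, H ∈ S ∧ x ∈ H) :
    S.ncard * (n - Nat.card Z) = Nat.card G - Nat.card Z := by
  classical
  have := Fintype.ofFinite G
  set F := (Set.toFinite S).toFinset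
  let D : Subgroup G → Finset G := fun H => (H : Set G).toFinset \ (Z : Set G).toFinset
  have hD : ∀ H ∈ F, (D H).card = n - Nat.card Z := by
    intro H hH
    obtain ⟨hZH, hn⟩ := hS H (by simpa [F] using hH)
    rw [Finset.card_sdiff_of_subset (Set.toFinset_subset_toFinset.mpr hZH), ← hn,
      ← Nat.card_eq_card_toFinset, ← Nat.card_eq_card_toFinset, SetLike.coe_sort_coe,
      SetLike.coe_sort_coe]
  have hdisj : (F : Set (Subgroup G)).PairwiseDisjoint D := by
    intro H₁ h₁ H₂ h₂ hne
    refine Finset.disjoint_left.mpr fun x hx₁ hx₂ => hne ?_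
    simp only [D, Finset.mem_sdiff, Set.mem_toFinset, SetLike.mem_coe] at hx₁ hx₂
    simp only [F, Finset.mem_coe, Set.Finite.mem_toFinset] at h₁ h₂
    exact (hunique x hx₁.2).unique ⟨h₁, hx₁.1⟩ ⟨h₂, hx₂.1⟩
  have hcover : F.biUnion D = (Z : Set G).toFinsetᶜ := by
    ext x
    simp only [F, D, Finset.mem_biUnion, Set.Finite.mem_toFinset, Finset.mem_sdiff,
      Set.mem_toFinset, SetLike.mem_coe, Finset.mem_compl]
    exact ⟨fun ⟨_, _, _, hx⟩ => hx,
      fun hx => (hunique x hx).exists.imp fun H h => ⟨h.1, h.2, hx⟩⟩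
  calc S.ncard * (n - Nat.card Z) = ∑ H ∈ F, (D H).card := by
        rw [Finset.sum_congr rfl hD, Finset.sum_const, smul_eq_mul, Set.ncard_eq_toFinset_card]
    _ = Nat.card G - Nat.card Z := by
        rw [← Finset.card_biUnion hdisj, hcover, Finset.card_compl, Nat.card_eq_fintype_card,
          ← Nat.card_eq_card_toFinset, SetLike.coe_sort_coe]

theorem IsPGroup.card_mul_le_card_of_lt {p : ℕ} [Fact p.Prime] {G : Type*} [Group G] [Finite G]
    (hG : IsPGroup p G) {K H : Subgroup G} (h : K < H) : Nat.card K * p ≤ Nat.card H := by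
  obtain ⟨n, hn⟩ := IsPGroup.iff_card.mp (hG.to_subgroup H)
  obtain ⟨m, hm⟩ := Subgroup.card_dvd_of_le h.le
  have hm_ne_one : m ≠ 1 := fun h1 =>
    h.ne (Subgroup.eq_of_le_of_card_ge h.le (by rw [hm, h1, mul_one]))
  obtain ⟨j, -, rfl⟩ := (Nat.dvd_prime_pow Fact.out).mp (Dvd.intro_left _ (hm.symm.trans hn))
  have hj : j ≠ 0 := by rintro rfl; exact hm_ne_one (pow_zero p)
  calc Nat.card K * p ≤ Nat.card K * p ^ j :=
        Nat.mul_le_mul_left _ (Nat.le_self_pow hj p)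
    _ = Nat.card H := hm.symm

theorem Subgroup.centralizer_singleton_mem_Ioo {G : Type*} [Group G] {x : G}
    (hx : x ∉ center G) : centralizer {x} ∈ Set.Ioo (center G) ⊤ :=
  ⟨lt_of_le_of_ne (center_le_centralizer _)
      fun h => hx (h ▸ mem_centralizer_singleton_iff.mpr rfl),
    lt_top_iff_ne_top.mpr fun h => hx (centralizer_eq_top_iff_subset.mp h rfl)⟩

section PrimeCube

variable {p : ℕ} [hp : Fact p.Prime] {G : Type*} [Group G] [Finite G]

theorem Subgroup.card_le_sq_of_ne_top (hcard : Nat.card G = p ^ 3) {H : Subgroup G}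
    (hH : H ≠ ⊤) : Nat.card H ≤ p ^ 2 := by
  have := (IsPGroup.of_card hcard).card_mul_le_card_of_lt (lt_top_iff_ne_top.mpr hH)
  rw [card_top, hcard, pow_succ] at this
  exact Nat.le_of_mul_le_mul_right this hp.out.pos

theorem Subgroup.card_center_eq_prime (hcard : Nat.card G = p ^ 3)
    (hG : ∃ x y : G, x * y ≠ y * x) : Nat.card (center G) = p := by
  obtain ⟨x, y, hxy⟩ := hG
  have hZ_ne_top : center G ≠ ⊤ := fun h =>
    hxy (mem_center_iff.mp (h ▸ mem_top x) y).symm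
  obtain ⟨k, hk0, hk⟩ := IsPGroup.card_center_eq_prime_pow hcard three_pos
  have hk2 : k ≤ 2 := by
    have := card_le_sq_of_ne_top hcard hZ_ne_top
    rwa [hk, Nat.pow_le_pow_iff_right hp.out.one_lt] at this
  suffices k ≠ 2 by rw [hk, show k = 1 by omega, pow_one]
  rintro rfl
  have hindex : (center G).index = p := by
    have := (center G).card_mul_index
    rw [hk, hcard, pow_succ] at this
    exact Nat.eq_of_mul_eq_mul_left (pow_pos hp.out.pos 2) this
  have : IsCyclic (G ⧸ center G) := isCyclic_of_prime_card hindex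
  exact hxy ((isMulCommutative_of_isCyclic_quotient_center_self G).is_comm.comm x y)

theorem Subgroup.centralizer_eq_self_of_card_eq_sq (hcard : Nat.card G = p ^ 3)
    (hZ : Nat.card (center G) = p) {H : Subgroup G} (hH : Nat.card H = p ^ 2) :
    centralizer (H : Set G) = H := by
  have := IsPGroup.isMulCommutative_of_card_eq_prime_sq hH
  have hC_ne_top : centralizer (H : Set G) ≠ ⊤ := by
    intro h
    have := card_le_of_le (centralizer_eq_top_iff_subset.mp h)
    rw [hH, hZ] at this
    exact (lt_self_pow₀ hp.out.one_lt one_lt_two).not_ge this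
  exact (eq_of_le_of_card_ge (le_centralizer H) (hH ▸ card_le_sq_of_ne_top hcard hC_ne_top)).symm

theorem Subgroup.center_le_of_card_eq_sq (hcard : Nat.card G = p ^ 3)
    (hZ : Nat.card (center G) = p) {H : Subgroup G} (hH : Nat.card H = p ^ 2) :
    center G ≤ H :=
  centralizer_eq_self_of_card_eq_sq hcard hZ hH ▸ center_le_centralizer _

theorem Subgroup.card_eq_sq_of_center_lt_of_lt_top (hcard : Nat.card G = p ^ 3)
    (hZ : Nat.card (center G) = p) {H : Subgroup G} (hZH : center G < H) (hH : H < ⊤) :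
    Nat.card H = p ^ 2 := by
  refine le_antisymm (card_le_sq_of_ne_top hcard hH.ne) ?_
  have := (IsPGroup.of_card hcard).card_mul_le_card_of_lt hZH
  rwa [hZ, ← sq] at this

theorem cdMeasure_eq_of_center_le (hcard : Nat.card G = p ^ 3)
    (hZ : Nat.card (center G) = p) {H : Subgroup G} (hZH : center G ≤ H) :
    cdMeasure G H = p ^ 4 := by
  rcases hZH.eq_or_lt with rfl | hZH
  · rw [cdMeasure, centralizer_center, card_top, hZ, hcard]
    ring
  rcases (le_top : H ≤ ⊤).eq_or_lt with rfl | hH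
  · rw [cdMeasure, coe_top, centralizer_univ, card_top, hZ, hcard]
    ring
  have hH2 := card_eq_sq_of_center_lt_of_lt_top hcard hZ hZH hH
  rw [cdMeasure, centralizer_eq_self_of_card_eq_sq hcard hZ hH2, hH2]
  ring

theorem cdMeasure_le_of_not_center_le (hcard : Nat.card G = p ^ 3)
    (hZ : Nat.card (center G) = p) {H : Subgroup G} (hZH : ¬ center G ≤ H) :
    cdMeasure G H ≤ p ^ 3 := by
  by_cases hC : centralizer (H : Set G) = ⊤
  · have hHZ : H < center G :=
      lt_of_le_of_ne (centralizer_eq_top_iff_subset.mp hC) fun h => hZH h.ge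
    have hH1 : Nat.card H ≤ 1 := by
      have := (IsPGroup.of_card hcard).card_mul_le_card_of_lt hHZ
      exact Nat.le_of_mul_le_mul_right (this.trans_eq (hZ.trans (one_mul p).symm)) hp.out.pos
    calc cdMeasure G H = Nat.card H * p ^ 3 := by rw [cdMeasure, hC, card_top, hcard]
      _ ≤ 1 * p ^ 3 := Nat.mul_le_mul_right _ hH1
      _ = p ^ 3 := one_mul _
  obtain ⟨k, hk⟩ := IsPGroup.iff_card.mp ((IsPGroup.of_card hcard).to_subgroup H)
  have hk2 : k ≤ 2 := by
    have := card_le_sq_of_ne_top hcard (fun h : H = ⊤ => hZH (h ▸ le_top))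
    rwa [hk, Nat.pow_le_pow_iff_right hp.out.one_lt] at this
  have hk1 : k ≤ 1 := by
    suffices k ≠ 2 by omega
    rintro rfl
    exact hZH (center_le_of_card_eq_sq hcard hZ hk)
  calc cdMeasure G H ≤ p ^ 1 * p ^ 2 := by
        rw [cdMeasure, hk]
        exact Nat.mul_le_mul (Nat.pow_le_pow_right hp.out.pos hk1) (card_le_sq_of_ne_top hcard hC)
    _ = p ^ 3 := by ring

theorem Subgroup.eq_centralizer_singleton_of_mem (hcard : Nat.card G = p ^ 3)
    (hZ : Nat.card (center G) = p) {H : Subgroup G} (hZH : center G < H) (hH : H < ⊤) {x : G}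
    (hxH : x ∈ H) (hx : x ∉ center G) : H = centralizer {x} := by
  have hH2 := card_eq_sq_of_center_lt_of_lt_top hcard hZ hZH hH
  have hle : H ≤ centralizer {x} :=
    calc H = centralizer (H : Set G) := (centralizer_eq_self_of_card_eq_sq hcard hZ hH2).symm
      _ ≤ centralizer {x} := centralizer_le (Set.singleton_subset_iff.mpr hxH)
  obtain ⟨hZC, hC⟩ := centralizer_singleton_mem_Ioo hx
  exact eq_of_le_of_card_ge hle (by rw [hH2, card_eq_sq_of_center_lt_of_lt_top hcard hZ hZC hC])

theorem ncard_setOf_center_lt_lt_top (hcard : Nat.card G = p ^ 3)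
    (hZ : Nat.card (center G) = p) :
    {H : Subgroup G | center G < H ∧ H < ⊤}.ncard = p + 1 := by
  have hcount := ncard_mul_sub_card_eq_of_existsUnique_mem (center G)
    {H : Subgroup G | center G < H ∧ H < ⊤}
    (fun H hH => ⟨hH.1.le, card_eq_sq_of_center_lt_of_lt_top hcard hZ hH.1 hH.2⟩)
    (fun x hx => ⟨centralizer {x}, ⟨centralizer_singleton_mem_Ioo hx,
      mem_centralizer_singleton_iff.mpr rfl⟩,
      fun H ⟨⟨hZH, hH⟩, hxH⟩ => eq_centralizer_singleton_of_mem hcard hZ hZH hH hxH hx⟩)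
  have hfactor : (p + 1) * (p ^ 2 - p) = p ^ 3 - p := by
    have h2 : p ≤ p ^ 2 := Nat.le_self_pow two_ne_zero p
    have h3 : p ≤ p ^ 3 := Nat.le_self_pow three_ne_zero p
    zify [h2, h3]
    ring
  rw [hZ, hcard, ← hfactor] at hcount
  exact Nat.eq_of_mul_eq_mul_right (Nat.sub_pos_of_lt (lt_self_pow₀ hp.out.one_lt one_lt_two))
    hcount

theorem CD_eq_setOf_center_le (hcard : Nat.card G = p ^ 3) (hZ : Nat.card (center G) = p) :
    CD G = {H : Subgroup G | center G ≤ H} := by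
  have hp34 : p ^ 3 < p ^ 4 := Nat.pow_lt_pow_right hp.out.one_lt (by norm_num)
  ext H
  refine ⟨fun hH => ?_, fun hZH K => ?_⟩
  · by_contra hZH
    have := (cdMeasure_eq_of_center_le hcard hZ le_rfl).symm.trans_le (hH (center G))
    exact (this.trans (cdMeasure_le_of_not_center_le hcard hZ hZH)).not_gt hp34
  · rw [cdMeasure_eq_of_center_le hcard hZ hZH]
    by_cases hZK : center G ≤ K
    · exact (cdMeasure_eq_of_center_le hcard hZ hZK).le
    · exact (cdMeasure_le_of_not_center_le hcard hZ hZK).trans hp34.le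

end PrimeCube

theorem stmt_17 (p : ℕ) (hp : p.Prime) (G : Type*) [Group G] [Finite G]
    (hcard : Nat.card G = p ^ 3) (hnab : ∃ x y : G, x * y ≠ y * x) :
    CD G = {H : Subgroup G | Subgroup.center G ≤ H} ∧
    (∀ H : Subgroup G, Subgroup.center G < H → H < ⊤ → IsMulCommutative H) ∧
    {H : Subgroup G | Subgroup.center G < H ∧ H < ⊤}.ncard = p + 1 := by
  have := Fact.mk hp
  have hZ := card_center_eq_prime hcard hnab
  exact ⟨CD_eq_setOf_center_le hcard hZ,
    fun H hZH hH => IsPGroup.isMulCommutative_of_card_eq_prime_sq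
      (card_eq_sq_of_center_lt_of_lt_top hcard hZ hZH hH),
    ncard_setOf_center_lt_lt_top hcard hZ⟩
end

section
/- Let p be a prime and G a metabelian p-group of order p^n of maximal class with n > 3. If G possesses an abelian subgroup A with |G : A| = p, then CD(G) = {A}. -/
/-!
Maximal class with `n > 3` forces class at least 3, so `G / Z(G)` is not abelian and
`|G : Z(G)| ≥ p³`. The measure of a subgroup `H` with `H` or `C_G(H)` equal to `G` is at most
`|G| |Z(G)| < |G|² / p²`; otherwise both `H` and `C_G(H)` are proper, so the measure is at most
`(|G| / p)²`, which `A = C_G(A)` attains. In the equality case `H` and `C_G(H)` are maximal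
subgroups. Distinct maximal subgroups `H`, `K` generate `G`, so if `H ∩ K` centralizes both
it is central; but `|H ∩ K| ≥ |G| / p²` exceeds `|Z(G)|`. Applied to `H` and
`C_G(H)` this gives `H = C_G(H)`, so `H` is abelian of index `p`; applied to `H` and `A` it
gives `H = A`.
-/

open Subgroup

theorem Nat.eq_and_eq_of_le_of_le_of_mul_eq {a b N : ℕ} (ha : a ≤ N) (hb : b ≤ N)
    (h : a * b = N * N) : a = N ∧ b = N := by
  constructor <;> nlinarith

namespace Subgroup

variable {G : Type*} [Group G]

theorem centralizer_sup (H K : Subgroup G) :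
    centralizer ((H ⊔ K : Subgroup G) : Set G) = centralizer H ⊓ centralizer K := by
  ext x
  simp only [sup_eq_closure, centralizer_closure, mem_inf, mem_centralizer_iff, Set.mem_union,
    or_imp, forall_and]

theorem isCoatom_of_index_prime {p : ℕ} (hp : p.Prime) {H : Subgroup G} (hH : H.index = p) :
    IsCoatom H := by
  have : H.FiniteIndex := ⟨by rw [hH]; exact hp.ne_zero⟩
  refine ⟨fun h ↦ hp.one_lt.ne' (by rw [← hH, h, index_top]), fun K hHK ↦ ?_⟩
  have hlt := index_strictAnti hHK
  rcases hp.eq_one_or_self_of_dvd _ (hH ▸ index_dvd_of_le hHK.le) with h | h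
  · exact index_eq_one.mp h
  · omega

theorem card_le_card_inf_mul_index_mul_index (H K : Subgroup G) :
    Nat.card G ≤ Nat.card (H ⊓ K : Subgroup G) * (H.index * K.index) := by
  rw [← (H ⊓ K).card_mul_index]
  exact Nat.mul_le_mul_left _ index_inf_le

end Subgroup

theorem isMulCommutative_of_card_dvd_prime_sq {p : ℕ} [Fact p.Prime] {Q : Type*} [Group Q]
    (h : Nat.card Q ∣ p ^ 2) : IsMulCommutative Q := by
  obtain ⟨k, hk, hQ⟩ := (Nat.dvd_prime_pow Fact.out).mp h
  interval_cases k
  · have := (Nat.card_eq_one_iff_unique.mp hQ).1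
    exact ⟨⟨fun _ _ ↦ Subsingleton.elim _ _⟩⟩
  · have := isCyclic_of_prime_card (hQ.trans (pow_one p))
    infer_instance
  · exact IsPGroup.isMulCommutative_of_card_eq_prime_sq hQ

namespace IsPGroup

variable {p : ℕ} {G : Type*} [Group G] [Finite G]

theorem card_mul_le_of_ne_top [Fact p.Prime] (hG : IsPGroup p G) {K : Subgroup G} (hK : K ≠ ⊤) :
    Nat.card K * p ≤ Nat.card G := by
  obtain ⟨k, hk⟩ := hG.index K
  have hk0 : k ≠ 0 := by
    rintro rfl
    exact hK (index_eq_one.mp hk)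
  rw [← K.card_mul_index, hk]
  exact Nat.mul_le_mul_left _ (Nat.le_self_pow hk0 p)

theorem card_center_mul_sq_lt [Fact p.Prime] (hG : IsPGroup p G)
    (h : (⊤ : Subgroup G).lowerCentralSeries 2 ≠ ⊥) :
    Nat.card (center G) * p ^ 2 < Nat.card G := by
  obtain ⟨k, hk⟩ := hG.index (center G)
  have hk3 : 2 < k := by
    by_contra! hk2
    have : IsMulCommutative (G ⧸ center G) := isMulCommutative_of_card_dvd_prime_sq
      (by rw [← index_eq_card, hk]; exact pow_dvd_pow p hk2)
    refine h ?_
    rw [Subgroup.lowerCentralSeries_succ, top_lowerCentralSeries_one,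
      commutator_top_right_eq_bot_iff_le_center]
    exact Normal.quotient_commutative_iff_commutator_le.mp this
  calc Nat.card (center G) * p ^ 2 < Nat.card (center G) * p ^ k :=
        Nat.mul_lt_mul_of_pos_left (Nat.pow_lt_pow_right (Fact.out : p.Prime).one_lt hk3)
          Nat.card_pos
    _ = Nat.card G := by rw [← hk, card_mul_index]

end IsPGroup

section ChermakDelgado

variable {G : Type*} [Group G]

theorem cdMeasure_top : cdMeasure G ⊤ = Nat.card G * Nat.card (center G) := by
  rw [cdMeasure, coe_top, centralizer_univ, card_top]

variable [Finite G]

theorem cdMeasure_le_cdMeasure_centralizer (H : Subgroup G) :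
    cdMeasure G H ≤ cdMeasure G (centralizer H) := by
  rw [cdMeasure, cdMeasure, mul_comm]
  exact Nat.mul_le_mul_left _ (card_le_of_le (le_centralizer_iff.mp le_rfl))

theorem card_sq_le_cdMeasure (H : Subgroup G) [IsMulCommutative H] :
    Nat.card H ^ 2 ≤ cdMeasure G H := by
  rw [cdMeasure, sq]
  exact Nat.mul_le_mul_left _ (card_le_of_le (le_centralizer H))

variable {p : ℕ}

theorem eq_of_index_eq_prime_of_inf_le_centralizer (hp : p.Prime)
    (hZ : Nat.card (center G) * p ^ 2 < Nat.card G) {H K : Subgroup G}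
    (hH : H.index = p) (hK : K.index = p)
    (hHK : H ⊓ K ≤ centralizer H ⊓ centralizer K) : H = K := by
  by_contra hne
  have hsup : H ⊔ K = ⊤ :=
    (isCoatom_of_index_prime hp hH).sup_eq_top_of_ne (isCoatom_of_index_prime hp hK) hne
  have hcen : H ⊓ K ≤ center G := by
    rwa [← centralizer_univ, ← coe_top, ← hsup, centralizer_sup]
  have hcard := card_le_card_inf_mul_index_mul_index H K
  rw [hH, hK, ← sq] at hcard
  have := Nat.mul_le_mul_right (p ^ 2) (card_le_of_le hcen)
  omega

theorem eq_of_isMulCommutative_of_index_eq_prime (hp : p.Prime)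
    (hZ : Nat.card (center G) * p ^ 2 < Nat.card G) {H K : Subgroup G}
    [IsMulCommutative H] [IsMulCommutative K] (hH : H.index = p) (hK : K.index = p) : H = K :=
  eq_of_index_eq_prime_of_inf_le_centralizer hp hZ hH hK
    (le_inf (inf_le_left.trans (le_centralizer H)) (inf_le_right.trans (le_centralizer K)))

theorem cdMeasure_mul_sq_lt (hZ : Nat.card (center G) * p ^ 2 < Nat.card G) {H : Subgroup G}
    (hH : H = ⊤ ∨ centralizer (H : Set G) = ⊤) : cdMeasure G H * p ^ 2 < Nat.card G ^ 2 := by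
  have hle : cdMeasure G H ≤ cdMeasure G ⊤ := by
    rcases hH with rfl | hC
    · exact le_rfl
    · exact hC ▸ cdMeasure_le_cdMeasure_centralizer H
  calc cdMeasure G H * p ^ 2 ≤ Nat.card G * (Nat.card (center G) * p ^ 2) := by
        rw [← mul_assoc, ← cdMeasure_top]
        exact Nat.mul_le_mul_right _ hle
    _ < Nat.card G ^ 2 := by
        rw [sq (Nat.card G)]
        exact Nat.mul_lt_mul_of_pos_left hZ (Nat.card_pos (α := G))

variable [Fact p.Prime]

theorem cdMeasure_mul_sq_le (hG : IsPGroup p G) (hZ : Nat.card (center G) * p ^ 2 < Nat.card G)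
    (H : Subgroup G) : cdMeasure G H * p ^ 2 ≤ Nat.card G ^ 2 := by
  by_cases hH : H = ⊤ ∨ centralizer (H : Set G) = ⊤
  · exact (cdMeasure_mul_sq_lt hZ hH).le
  · obtain ⟨hH, hC⟩ := not_or.mp hH
    calc cdMeasure G H * p ^ 2
        = (Nat.card H * p) * (Nat.card (centralizer (H : Set G)) * p) := by
          rw [cdMeasure]; ring
      _ ≤ Nat.card G ^ 2 := by
          rw [sq]
          exact Nat.mul_le_mul (hG.card_mul_le_of_ne_top hH) (hG.card_mul_le_of_ne_top hC)

theorem isMulCommutative_and_index_eq_of_cdMeasure_mul_sq_eq (hG : IsPGroup p G)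
    (hZ : Nat.card (center G) * p ^ 2 < Nat.card G) {H : Subgroup G}
    (h : cdMeasure G H * p ^ 2 = Nat.card G ^ 2) : IsMulCommutative H ∧ H.index = p := by
  have hp : p.Prime := Fact.out
  have hH : ¬(H = ⊤ ∨ centralizer (H : Set G) = ⊤) := fun hH ↦
    (cdMeasure_mul_sq_lt hZ hH).ne h
  have h₁ := hG.card_mul_le_of_ne_top (not_or.mp hH).1
  have h₂ := hG.card_mul_le_of_ne_top (not_or.mp hH).2
  have hprod : (Nat.card H * p) * (Nat.card (centralizer (H : Set G)) * p) =
      Nat.card G * Nat.card G := by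
    rw [← sq, ← h, cdMeasure]; ring
  have index_eq {K : Subgroup G} (hK : Nat.card K * p = Nat.card G) : K.index = p :=
    Nat.eq_of_mul_eq_mul_left (Nat.card_pos (α := K)) (by rw [card_mul_index, hK])
  obtain ⟨hH', hC'⟩ := Nat.eq_and_eq_of_le_of_le_of_mul_eq h₁ h₂ hprod
  have hiH := index_eq hH'
  have hHC : H = centralizer (H : Set G) :=
    eq_of_index_eq_prime_of_inf_le_centralizer hp hZ hiH (index_eq hC')
      (le_inf inf_le_right (inf_le_left.trans (le_centralizer_iff.mp le_rfl)))
  exact ⟨le_centralizer_iff_isMulCommutative.mp hHC.le, hiH⟩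

end ChermakDelgado

theorem stmt_18_general (p n : ℕ) (hp : p.Prime) (G : Type*) [Group G] [Finite G]
    (hcard : Nat.card G = p ^ n) (hn : 3 < n)
    (hmax₂ : ∀ k < n - 1, (⊤ : Subgroup G).lowerCentralSeries k ≠ ⊥)
    (A : Subgroup G) (hab : IsMulCommutative A) (hiA : A.index = p) :
    CD G = {A} := by
  have : Fact p.Prime := ⟨hp⟩
  have hG : IsPGroup p G := .of_card hcard
  have hZ := hG.card_center_mul_sq_lt (hmax₂ 2 (by omega))
  have hA : cdMeasure G A * p ^ 2 = Nat.card G ^ 2 := by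
    refine le_antisymm (cdMeasure_mul_sq_le hG hZ A) ?_
    calc Nat.card G ^ 2 = Nat.card A ^ 2 * p ^ 2 := by rw [← mul_pow, ← hiA, card_mul_index]
      _ ≤ cdMeasure G A * p ^ 2 := Nat.mul_le_mul_right _ (card_sq_le_cdMeasure A)
  ext H
  constructor
  · intro hH
    have hHmax : cdMeasure G H * p ^ 2 = Nat.card G ^ 2 :=
      le_antisymm (cdMeasure_mul_sq_le hG hZ H) (hA ▸ Nat.mul_le_mul_right _ (hH A))
    obtain ⟨hcomm, hiH⟩ := isMulCommutative_and_index_eq_of_cdMeasure_mul_sq_eq hG hZ hHmax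
    exact eq_of_isMulCommutative_of_index_eq_prime hp hZ hiH hiA
  · rintro rfl K
    exact Nat.le_of_mul_le_mul_right (hA ▸ cdMeasure_mul_sq_le hG hZ K) (pow_pos hp.pos 2)

theorem stmt_18 (p n : ℕ) (hp : p.Prime) (G : Type*) [Group G] [Finite G]
    (hcard : Nat.card G = p ^ n) (hn : 3 < n)
    (hmeta : IsMulCommutative (commutator G))
    (hmax₁ : (⊤ : Subgroup G).lowerCentralSeries (n - 1) = ⊥)
    (hmax₂ : ∀ k < n - 1, (⊤ : Subgroup G).lowerCentralSeries k ≠ ⊥)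
    (A : Subgroup G) (hab : IsMulCommutative A) (hiA : A.index = p) :
    CD G = {A} :=
  stmt_18_general p n hp G hcard hn hmax₂ A hab hiA
end
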